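/- arXiv:2406.01478 — 6 statements merged into one kernel-verified Lean document; each statement's English description precedes it below -/
import Mathlib

section
/- Let f : ℝ^d → ℝ be μ-strongly convex and differentiable with minimizer x*. Suppose points x, x̂, x⁺ ∈ ℝ^d, a step size η > 0, and a parameter α ∈ (0,1) satisfy (i) ‖x̂ - x + η∇f(x̂)‖ ≤ α√(1+2ημ)‖x̂ - x‖, and (ii) x⁺ = (1/(1+2ημ))(x - η∇f(x̂)) + (2ημ/(1+2ημ)) x̂. Then ‖x⁺ - x*‖² ≤ ‖x - x*‖²/(1+2ημ). -/
open scoped RealInnerProductSpace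

/-!
With `s = 1 + 2ημ` and `e = x̂ - x + η∇f(x̂)`, the update reads `s (x⁺ - x*) = s (x̂ - x*) - e`.
Expanding the square, strong monotonicity of `∇f` between `x̂` and `x*` (where `∇f(x*) = 0`)
gives `⟪x̂ - x*, η∇f(x̂)⟫ ≥ ημ‖x̂ - x*‖²`, and the error condition gives `‖e‖² ≤ s‖x̂ - x‖²`.
Since `s² - 2ημs = s`, everything recombines into `s² ‖x⁺ - x*‖² ≤ s ‖x - x*‖²`.
-/

section FirstOrder

variable {E : Type*} {s : Set E} {f : E → ℝ} {x y : E}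

theorem ConvexOn.add_fderiv_le [NormedAddCommGroup E] [NormedSpace ℝ E] {f' : E →L[ℝ] ℝ}
    (hf : ConvexOn ℝ s f) (hx : x ∈ s) (hy : y ∈ s) (hf' : HasFDerivAt f f' x) :
    f x + f' (y - x) ≤ f y := by
  have hline : HasDerivAt (f ∘ (AffineMap.lineMap x y : ℝ →ᵃ[ℝ] E)) (f' (y - x)) 0 :=
    hf'.comp_hasDerivAt_of_eq (0 : ℝ) AffineMap.hasDerivAt_lineMap
      (AffineMap.lineMap_apply_zero x y).symm
  have hslope := (hf.comp_affineMap (AffineMap.lineMap x y)).le_slope_of_hasDerivAt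
    (by simpa using hx) (by simpa using hy) one_pos hline
  simp only [slope, Function.comp_apply, AffineMap.lineMap_apply_zero,
    AffineMap.lineMap_apply_one, sub_zero, inv_one, one_smul, vsub_eq_sub] at hslope
  linarith

variable [NormedAddCommGroup E] [InnerProductSpace ℝ E] {m : ℝ}

theorem StrongConvexOn.add_fderiv_add_le {f' : E →L[ℝ] ℝ} (hf : StrongConvexOn s m f)
    (hx : x ∈ s) (hy : y ∈ s) (hf' : HasFDerivAt f f' x) :
    f x + f' (y - x) + m / 2 * ‖y - x‖ ^ 2 ≤ f y := by
  have hquad := ((hasStrictFDerivAt_norm_sq x).hasFDerivAt).const_mul (m / 2)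
  have h := (strongConvexOn_iff_convex.mp hf).add_fderiv_le hx hy (hf'.sub hquad)
  simp only [sub_apply, smul_apply, innerSL_apply_apply, smul_eq_mul, nsmul_eq_mul,
    Nat.cast_ofNat, inner_sub_right, real_inner_self_eq_norm_sq] at h
  rw [norm_sub_sq_real, real_inner_comm]
  linarith

theorem StrongConvexOn.mul_norm_sub_sq_le_inner_sub [CompleteSpace E] {g g' : E}
    (hf : StrongConvexOn s m f) (hx : x ∈ s) (hy : y ∈ s)
    (hg : HasGradientAt f g x) (hg' : HasGradientAt f g' y) :
    m * ‖x - y‖ ^ 2 ≤ ⟪g - g', x - y⟫ := by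
  have hxy := hf.add_fderiv_add_le hx hy hg.hasFDerivAt
  have hyx := hf.add_fderiv_add_le hy hx hg'.hasFDerivAt
  simp only [InnerProductSpace.toDual_apply_apply] at hxy hyx
  rw [norm_sub_rev y x, ← neg_sub x y, inner_neg_right] at hxy
  rw [inner_sub_left]
  linarith

end FirstOrder

section HPEStep

variable {E : Type*} [NormedAddCommGroup E] [InnerProductSpace ℝ E]

theorem norm_hpe_update_sub_sq_le {x xhat xstar g : E} {μ η : ℝ} (hμ : 0 ≤ μ) (hη : 0 ≤ η)
    (hmono : μ * ‖xhat - xstar‖ ^ 2 ≤ ⟪g, xhat - xstar⟫)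
    (herr : ‖xhat - x + η • g‖ ≤ √(1 + 2 * η * μ) * ‖xhat - x‖) :
    ‖(1 / (1 + 2 * η * μ)) • (x - η • g) + (2 * η * μ / (1 + 2 * η * μ)) • xhat - xstar‖ ^ 2
      ≤ ‖x - xstar‖ ^ 2 / (1 + 2 * η * μ) := by
  set s := 1 + 2 * η * μ with hs_def
  have hs : 0 < s := by positivity
  set xplus := (1 / s) • (x - η • g) + (2 * η * μ / s) • xhat
  set e := xhat - x + η • g with he
  have hupd : s • (xplus - xstar) = s • (xhat - xstar) - e := by
    rw [he, hs_def]
    match_scalars <;> field_simp <;> ring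
  have hexpand : s ^ 2 * ‖xplus - xstar‖ ^ 2
      = s ^ 2 * ‖xhat - xstar‖ ^ 2 - 2 * (s * ⟪xhat - xstar, e⟫) + ‖e‖ ^ 2 := by
    have h := congrArg (‖·‖ ^ 2) hupd
    simp only [norm_sub_sq_real (s • _), norm_smul, mul_pow, Real.norm_of_nonneg hs.le,
      real_inner_smul_left] at h
    exact h
  have herr_sq : ‖e‖ ^ 2 ≤ s * ‖xhat - x‖ ^ 2 := by
    calc ‖e‖ ^ 2 ≤ (√s * ‖xhat - x‖) ^ 2 := pow_le_pow_left₀ (norm_nonneg _) herr 2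
      _ = s * ‖xhat - x‖ ^ 2 := by rw [mul_pow, Real.sq_sqrt hs.le]
  have hinner : ⟪xhat - xstar, e⟫ = ⟪xhat - xstar, xhat - x⟫ + η * ⟪g, xhat - xstar⟫ := by
    rw [he, inner_add_right, real_inner_smul_right, real_inner_comm g]
  have hnorm_x :
      ‖x - xstar‖ ^ 2 = ‖xhat - xstar‖ ^ 2 - 2 * ⟪xhat - xstar, xhat - x⟫ + ‖xhat - x‖ ^ 2 := by
    rw [← norm_sub_sq_real, sub_sub_sub_cancel_left]
  have hmono' := mul_le_mul_of_nonneg_left hmono (by positivity : 0 ≤ 2 * η * s)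
  rw [hinner] at hexpand
  rw [le_div_iff₀ hs, hnorm_x]
  refine le_of_mul_le_mul_left ?_ hs
  linear_combination hexpand + hmono' + herr_sq

end HPEStep

/-- Hybrid proximal extragradient step contraction for strongly convex `f`. -/
theorem stmt_0 {d : ℕ} (f : EuclideanSpace ℝ (Fin d) → ℝ) (μ η α : ℝ)
    (xstar x xhat xplus : EuclideanSpace ℝ (Fin d))
    (hμ : 0 < μ) (hη : 0 < η) (hα : α ∈ Set.Ioo (0:ℝ) 1)
    (hf : Differentiable ℝ f)
    (hsc : StrongConvexOn Set.univ μ f)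
    (hmin : ∀ y, f xstar ≤ f y)
    (hprox : ‖xhat - x + η • gradient f xhat‖ ≤ α * Real.sqrt (1 + 2*η*μ) * ‖xhat - x‖)
    (hupd : xplus = (1/(1+2*η*μ)) • (x - η • gradient f xhat)
              + (2*η*μ/(1+2*η*μ)) • xhat) :
    ‖xplus - xstar‖^2 ≤ ‖x - xstar‖^2 / (1 + 2*η*μ) := by
  have hgrad_min : HasGradientAt f 0 xstar := by
    have h := (hf xstar).hasFDerivAt
    rwa [IsLocalMin.fderiv_eq_zero (Filter.Eventually.of_forall hmin), ← map_zero
      (InnerProductSpace.toDual ℝ _), ← hasGradientAt_iff_hasFDerivAt] at h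
  have hmono := hsc.mul_norm_sub_sq_le_inner_sub trivial trivial (hf xhat).hasGradientAt hgrad_min
  rw [sub_zero] at hmono
  have herr : ‖xhat - x + η • gradient f xhat‖ ≤ √(1 + 2 * η * μ) * ‖xhat - x‖ :=
    hprox.trans <| mul_le_mul_of_nonneg_right
      (mul_le_of_le_one_left (Real.sqrt_nonneg _) hα.2.le) (norm_nonneg _)
  rw [hupd]
  exact norm_hpe_update_sub_sq_le hμ.le hη.le hmono herr
end

section
/- Under the same hypotheses as the hybrid proximal extragradient step (f μ-strongly convex differentiable with minimizer x*, ‖x̂ - x + η∇f(x̂)‖ ≤ α√(1+2ημ)‖x̂ - x‖ with α ∈ (0,1), and x⁺ = (1/(1+2ημ))(x - η∇f(x̂)) + (2ημ/(1+2ημ)) x̂), the midpoint satisfies ‖x - x̂‖ ≤ ‖x - x*‖/√(1-α²). -/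
/-!
Put `u = x̂ - x`, `v = x̂ - x*` and `e = u + η ∇f(x̂)`, so that `x - x* = v - u` and
`‖e‖² ≤ α² (1 + 2ημ) ‖u‖²`. Strong convexity and `∇f(x*) = 0` give `⟪∇f(x̂), v⟫ ≥ μ‖v‖²`, hence
`⟪u, v⟫ ≤ ‖e‖‖v‖ - ημ‖v‖²` and
`‖v - u‖² ≥ (1 + 2ημ)‖v‖² - 2‖e‖‖v‖ + ‖u‖² ≥ ‖u‖² - ‖e‖² / (1 + 2ημ) ≥ (1 - α²)‖u‖²`.
-/

open scoped RealInnerProductSpace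

theorem ConvexOn.add_le_of_hasFDerivAt {E : Type*} [NormedAddCommGroup E] [NormedSpace ℝ E]
    {g : E → ℝ} {g' : E →L[ℝ] ℝ} {a : E} (hg : ConvexOn ℝ Set.univ g) (hd : HasFDerivAt g g' a)
    (b : E) : g a + g' (b - a) ≤ g b := by
  have hline : HasDerivAt (fun t : ℝ => g (AffineMap.lineMap a b t)) (g' (b - a)) 0 := by
    have hd' : HasFDerivAt g g' (AffineMap.lineMap a b (0 : ℝ)) := by simpa using hd
    exact hd'.comp_hasDerivAt 0 AffineMap.hasDerivAt_lineMap
  have hφ : ConvexOn ℝ Set.univ (fun t : ℝ => g (AffineMap.lineMap a b t)) :=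
    hg.comp_affineMap (AffineMap.lineMap a b)
  have hs := hφ.le_slope_of_hasDerivAt (Set.mem_univ 0) (Set.mem_univ 1) zero_lt_one hline
  simp only [slope_def_field, AffineMap.lineMap_apply_zero, AffineMap.lineMap_apply_one] at hs
  linarith

section InnerProductSpace

variable {E : Type*} [NormedAddCommGroup E] [InnerProductSpace ℝ E]

section StrongConvexOn

variable [CompleteSpace E] {f : E → ℝ} {m : ℝ} {a b f'a f'b : E}

theorem StrongConvexOn.add_inner_add_le_of_hasGradientAt (hf : StrongConvexOn Set.univ m f)
    (ha : HasGradientAt f f'a a) (b : E) :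
    f a + ⟪f'a, b - a⟫ + m / 2 * ‖b - a‖ ^ 2 ≤ f b := by
  have hsq : HasFDerivAt (fun z : E => m / 2 * ‖z‖ ^ 2) ((m / 2) • (2 • innerSL ℝ a)) a := by
    simpa using (hasStrictFDerivAt_norm_sq a).hasFDerivAt.const_mul (m / 2)
  have key := (strongConvexOn_iff_convex.mp hf).add_le_of_hasFDerivAt
    (hasGradientAt_iff_hasFDerivAt.mp ha |>.sub hsq) b
  simp only [sub_apply, smul_apply,
    InnerProductSpace.toDual_apply_apply, innerSL_apply_apply, smul_eq_mul, nsmul_eq_mul] at key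
  have hexp : ‖b - a‖ ^ 2 = ‖b‖ ^ 2 - 2 * ⟪a, b - a⟫ - ‖a‖ ^ 2 := by
    rw [inner_sub_right, real_inner_self_eq_norm_sq, norm_sub_sq_real, real_inner_comm]; ring
  rw [hexp]
  push_cast at key
  linarith

theorem StrongConvexOn.mul_norm_sq_le_inner_sub_of_hasGradientAt (hf : StrongConvexOn Set.univ m f)
    (ha : HasGradientAt f f'a a) (hb : HasGradientAt f f'b b) :
    m * ‖a - b‖ ^ 2 ≤ ⟪f'a - f'b, a - b⟫ := by
  have hab := hf.add_inner_add_le_of_hasGradientAt ha b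
  have hba := hf.add_inner_add_le_of_hasGradientAt hb a
  rw [← neg_sub a b, norm_neg, inner_neg_right] at hab
  rw [inner_sub_left]
  linarith

end StrongConvexOn

theorem one_sub_sq_mul_norm_sq_le_of_inner_le {u v G : E} {η μ α : ℝ} (hη : 0 ≤ η)
    (hc : 0 < 1 + 2 * η * μ) (hG : μ * ‖v‖ ^ 2 ≤ ⟪G, v⟫)
    (herr : ‖u + η • G‖ ≤ α * √(1 + 2 * η * μ) * ‖u‖) :
    (1 - α ^ 2) * ‖u‖ ^ 2 ≤ ‖v - u‖ ^ 2 := by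
  set c := 1 + 2 * η * μ
  set e := u + η • G
  have he : ‖e‖ ^ 2 ≤ α ^ 2 * c * ‖u‖ ^ 2 := by
    calc ‖e‖ ^ 2 ≤ (α * √c * ‖u‖) ^ 2 := pow_le_pow_left₀ (norm_nonneg e) herr 2
      _ = α ^ 2 * c * ‖u‖ ^ 2 := by rw [mul_pow, mul_pow, Real.sq_sqrt hc.le]
  have huv : ⟪u, v⟫ ≤ ‖e‖ * ‖v‖ - η * μ * ‖v‖ ^ 2 := by
    have : ⟪u, v⟫ = ⟪e, v⟫ - η * ⟪G, v⟫ := by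
      rw [show u = e - η • G by simp [e], inner_sub_left, real_inner_smul_left]
    rw [this]
    nlinarith [real_inner_le_norm e v]
  have hexp : ‖v - u‖ ^ 2 = ‖v‖ ^ 2 - 2 * ⟪u, v⟫ + ‖u‖ ^ 2 := by
    rw [norm_sub_sq_real, real_inner_comm]
  have hsquare : 0 ≤ (c * ‖v‖ - ‖e‖) ^ 2 := sq_nonneg _
  nlinarith

end InnerProductSpace

theorem le_div_sqrt_of_mul_sq_le {k a b : ℝ} (hk : 0 < k) (hb : 0 ≤ b) (h : k * a ^ 2 ≤ b ^ 2) :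
    a ≤ b / √k := by
  rw [le_div_iff₀ (Real.sqrt_pos.mpr hk)]
  calc a * √k ≤ √(k * a ^ 2) := by
        rw [Real.sqrt_mul hk.le, Real.sqrt_sq_eq_abs, mul_comm]
        exact mul_le_mul_of_nonneg_left (le_abs_self a) (Real.sqrt_nonneg k)
    _ ≤ √(b ^ 2) := Real.sqrt_le_sqrt h
    _ = b := Real.sqrt_sq hb

theorem stmt_1_general {d : ℕ} (f : EuclideanSpace ℝ (Fin d) → ℝ) (μ η α : ℝ)
    (xstar x xhat : EuclideanSpace ℝ (Fin d))
    (hμ : 0 < μ) (hη : 0 < η) (hα : α ∈ Set.Ioo (0:ℝ) 1)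
    (hf : Differentiable ℝ f)
    (hsc : StrongConvexOn Set.univ μ f)
    (hmin : ∀ y, f xstar ≤ f y)
    (hprox : ‖xhat - x + η • gradient f xhat‖ ≤ α * Real.sqrt (1 + 2*η*μ) * ‖xhat - x‖) :
    ‖x - xhat‖ ≤ ‖x - xstar‖ / Real.sqrt (1 - α^2) := by
  have hgrad_min : gradient f xstar = 0 := by
    simp [gradient, IsLocalMin.fderiv_eq_zero (Filter.Eventually.of_forall hmin)]
  have hmono : μ * ‖xhat - xstar‖ ^ 2 ≤ ⟪gradient f xhat, xhat - xstar⟫ := by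
    simpa [hgrad_min] using hsc.mul_norm_sq_le_inner_sub_of_hasGradientAt
      (hf xhat).hasGradientAt (hf xstar).hasGradientAt
  have hbound := one_sub_sq_mul_norm_sq_le_of_inner_le hη.le (by positivity) hmono hprox
  rw [show xhat - xstar - (xhat - x) = x - xstar by abel, norm_sub_rev] at hbound
  exact le_div_sqrt_of_mul_sq_le (by nlinarith [hα.1, hα.2]) (norm_nonneg _) hbound

/-- Midpoint bound in the hybrid proximal extragradient step. -/
theorem stmt_1 {d : ℕ} (f : EuclideanSpace ℝ (Fin d) → ℝ) (μ η α : ℝ)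
    (xstar x xhat xplus : EuclideanSpace ℝ (Fin d))
    (hμ : 0 < μ) (hη : 0 < η) (hα : α ∈ Set.Ioo (0:ℝ) 1)
    (hf : Differentiable ℝ f)
    (hsc : StrongConvexOn Set.univ μ f)
    (hmin : ∀ y, f xstar ≤ f y)
    (hprox : ‖xhat - x + η • gradient f xhat‖ ≤ α * Real.sqrt (1 + 2*η*μ) * ‖xhat - x‖)
    (hupd : xplus = (1/(1+2*η*μ)) • (x - η • gradient f xhat)
              + (2*η*μ/(1+2*η*μ)) • xhat) :
    ‖x - xhat‖ ≤ ‖x - xstar‖ / Real.sqrt (1 - α^2) :=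
  stmt_1_general f μ η α xstar x xhat hμ hη hα hf hsc hmin hprox
end

section
/- Let g : ℝ^d → ℝ^d and H̃ ∈ ℝ^{d×d}, and suppose x̃, x, η̃ > 0, μ > 0, α ∈ (0,1) satisfy x̃ - x = -η̃(g(x) + H̃(x̃ - x)) and ‖x̃ - x + η̃ g(x̃)‖ > α√(1+2η̃μ)‖x̃ - x‖. Then for η = βη̃ with β ∈ (0,1), both η > αβ‖x̃ - x‖ / ‖g(x̃) - g(x) - H̃(x̃ - x)‖ and η > 2α²βμ‖x̃ - x‖² / ‖g(x̃) - g(x) - H̃(x̃ - x)‖² hold. -/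
/-!
Because `xt` solves the linearized equation, the residual `xt - x + ηt • g xt` equals `ηt` times
the linearization error `r = g xt - g x - H (xt - x)`. The violated line-search condition thus
reads `α √(1 + 2 ηt μ) ‖xt - x‖ < ηt ‖r‖`. Dropping the square root (which is `≥ 1`) gives the
first bound; squaring and keeping only the `2 ηt μ` part gives the second. Both are then scaled
by `β`.
-/

theorem sub_add_smul_eq_smul_sub_sub {R E : Type*} [CommRing R] [AddCommGroup E] [Module R E]
    (g H : E → E) (x xt : E) (t : R) (hxt : xt - x = -(t • (g x + H (xt - x)))) :
    xt - x + t • g xt = t • (g xt - g x - H (xt - x)) := by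
  linear_combination (norm := module) hxt

theorem mul_sq_lt_of_mul_sqrt_lt {c t μ a : ℝ} (hc : 0 ≤ c) (ht : 0 < t) (hμ : 0 ≤ μ)
    (h : c * √(1 + 2 * t * μ) < t * a) : 2 * μ * c ^ 2 < t * a ^ 2 := by
  have hsq : c ^ 2 * (1 + 2 * t * μ) < t ^ 2 * a ^ 2 := by
    have := pow_lt_pow_left₀ h (by positivity) two_ne_zero
    rwa [mul_pow, mul_pow, Real.sq_sqrt (by positivity)] at this
  refine lt_of_mul_lt_mul_left ?_ ht.le
  nlinarith [sq_nonneg c]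

theorem stmt_2_general {d : ℕ} (g : EuclideanSpace ℝ (Fin d) → EuclideanSpace ℝ (Fin d))
    (H : EuclideanSpace ℝ (Fin d) →L[ℝ] EuclideanSpace ℝ (Fin d))
    (x xt : EuclideanSpace ℝ (Fin d)) (ηt μ α β η : ℝ)
    (hηt : 0 < ηt) (hμ : 0 < μ) (hα : α ∈ Set.Ioo (0:ℝ) 1) (hβ : β ∈ Set.Ioo (0:ℝ) 1)
    (hdef : xt - x = -(ηt • (g x + H (xt - x))))
    (hviol : α * Real.sqrt (1 + 2*ηt*μ) * ‖xt - x‖ < ‖xt - x + ηt • g xt‖)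
    (hη : η = β * ηt) :
    α*β*‖xt - x‖ / ‖g xt - g x - H (xt - x)‖ < η ∧
    2*α^2*β*μ*‖xt - x‖^2 / ‖g xt - g x - H (xt - x)‖^2 < η := by
  set r := g xt - g x - H (xt - x)
  have hc : 0 ≤ α * ‖xt - x‖ := mul_nonneg hα.1.le (norm_nonneg _)
  have hviol' : α * ‖xt - x‖ * √(1 + 2 * ηt * μ) < ηt * ‖r‖ := by
    rwa [sub_add_smul_eq_smul_sub_sub g H x xt ηt hdef, norm_smul, Real.norm_of_nonneg hηt.le,
      mul_right_comm] at hviol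
  have hr : 0 < ‖r‖ :=
    pos_of_mul_pos_right ((mul_nonneg hc (Real.sqrt_nonneg _)).trans_lt hviol') hηt.le
  have h₁ : α * ‖xt - x‖ < ηt * ‖r‖ :=
    (le_mul_of_one_le_right hc (Real.one_le_sqrt.2 (by nlinarith))).trans_lt hviol'
  have h₂ := mul_sq_lt_of_mul_sqrt_lt hc hηt hμ.le hviol'
  subst hη
  constructor
  · rw [div_lt_iff₀ hr]
    linarith [mul_lt_mul_of_pos_left h₁ hβ.1]
  · rw [div_lt_iff₀ (by positivity)]
    linarith [mul_lt_mul_of_pos_left h₂ hβ.1]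

/-- Step-size lower bounds when the line-search condition is violated. -/
theorem stmt_2 {d : ℕ} (g : EuclideanSpace ℝ (Fin d) → EuclideanSpace ℝ (Fin d))
    (H : EuclideanSpace ℝ (Fin d) →L[ℝ] EuclideanSpace ℝ (Fin d))
    (x xt : EuclideanSpace ℝ (Fin d)) (ηt μ α β η : ℝ)
    (hηt : 0 < ηt) (hμ : 0 < μ) (hα : α ∈ Set.Ioo (0:ℝ) 1) (hβ : β ∈ Set.Ioo (0:ℝ) 1)
    (hdef : xt - x = -(ηt • (g x + H (xt - x))))
    (hviol : α * Real.sqrt (1 + 2*ηt*μ) * ‖xt - x‖ < ‖xt - x + ηt • g xt‖)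
    (hne : g xt - g x - H (xt - x) ≠ 0)
    (hη : η = β * ηt) :
    α*β*‖xt - x‖ / ‖g xt - g x - H (xt - x)‖ < η ∧
    2*α^2*β*μ*‖xt - x‖^2 / ‖g xt - g x - H (xt - x)‖^2 < η :=
  stmt_2_general g H x xt ηt μ α β η hηt hμ hα hβ hdef hviol hη
end

section
/- Let H̃ ∈ ℝ^{d×d} be a symmetric positive semidefinite matrix, g ∈ ℝ^d, and let 0 < η ≤ η̃. Define x̂ = x - η(I + ηH̃)^{-1}g and x̃ = x - η̃(I + η̃H̃)^{-1}g. Then ‖x̃ - x‖ ≤ (η̃/η)‖x̂ - x‖. -/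
open scoped RealInnerProductSpace

/-! Write u = x̂ - x and v = x̃ - x. Eliminating g from the two resolvent equations gives
η̃ u - η v + η η̃ H (u - v) = 0; pairing with u - v and using H ⪰ 0 yields
η̃ ‖u‖² + η ‖v‖² ≤ (η + η̃) ⟪u, v⟫ ≤ (η + η̃) ‖u‖ ‖v‖, i.e. (η̃ ‖u‖ - η ‖v‖)(‖u‖ - ‖v‖) ≤ 0,
which forces η ‖v‖ ≤ η̃ ‖u‖. -/

theorem le_div_mul_of_weighted_sq_le {η ηt a b : ℝ} (hη : 0 < η) (hle : η ≤ ηt) (ha : 0 ≤ a)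
    (h : ηt * a ^ 2 + η * b ^ 2 ≤ (η + ηt) * (a * b)) : b ≤ ηt / η * a := by
  have hfactor : (ηt * a - η * b) * (a - b) ≤ 0 := by linarith
  rw [div_mul_eq_mul_div, le_div_iff₀ hη]
  rcases le_or_gt b a with hba | hab
  · nlinarith [mul_le_mul_of_nonneg_right hle ha]
  · nlinarith

section ResolventStep

variable {E : Type*} [NormedAddCommGroup E] [InnerProductSpace ℝ E]

theorem resolvent_steps_combine (H : E →ₗ[ℝ] E) {g u v : E} {η ηt : ℝ}
    (hu : u + η • H u = -(η • g)) (hv : v + ηt • H v = -(ηt • g)) :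
    ηt • u - η • v + (η * ηt) • H (u - v) = 0 := by
  rw [map_sub]
  linear_combination (norm := module) ηt • hu - η • hv

theorem weighted_norm_sq_le_inner_of_resolvent_steps (H : E →ₗ[ℝ] E)
    (hpsd : ∀ w, 0 ≤ ⟪H w, w⟫) {g u v : E} {η ηt : ℝ} (hη : 0 ≤ η) (hηt : 0 ≤ ηt)
    (hu : u + η • H u = -(η • g)) (hv : v + ηt • H v = -(ηt • g)) :
    ηt * ‖u‖ ^ 2 + η * ‖v‖ ^ 2 ≤ (η + ηt) * ⟪u, v⟫ := by
  have hpair := congrArg (⟪·, u - v⟫) (resolvent_steps_combine H hu hv)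
  simp only [inner_add_left, inner_sub_left, real_inner_smul_left, inner_zero_left] at hpair
  simp only [inner_sub_right, real_inner_self_eq_norm_sq, real_inner_comm u v] at hpair
  have hcurv := mul_nonneg (mul_nonneg hη hηt) (hpsd (u - v))
  rw [inner_sub_right] at hcurv
  linarith

theorem norm_resolvent_step_le (H : E →ₗ[ℝ] E) (hpsd : ∀ w, 0 ≤ ⟪H w, w⟫) {g u v : E}
    {η ηt : ℝ} (hη : 0 < η) (hle : η ≤ ηt)
    (hu : u + η • H u = -(η • g)) (hv : v + ηt • H v = -(ηt • g)) :
    ‖v‖ ≤ ηt / η * ‖u‖ := by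
  have hineq := weighted_norm_sq_le_inner_of_resolvent_steps H hpsd hη.le (hη.le.trans hle) hu hv
  refine le_div_mul_of_weighted_sq_le hη hle (norm_nonneg u) (hineq.trans ?_)
  gcongr
  · linarith
  · exact real_inner_le_norm u v

end ResolventStep

theorem stmt_3_general {d : ℕ}
    (H : EuclideanSpace ℝ (Fin d) →L[ℝ] EuclideanSpace ℝ (Fin d))
    (hpsd : ∀ v, 0 ≤ ⟪H v, v⟫)
    (g x xhat xt : EuclideanSpace ℝ (Fin d)) (η ηt : ℝ)
    (hη : 0 < η) (hle : η ≤ ηt)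
    (hxhat : xhat - x + η • H (xhat - x) = -(η • g))
    (hxt : xt - x + ηt • H (xt - x) = -(ηt • g)) :
    ‖xt - x‖ ≤ (ηt/η) * ‖xhat - x‖ :=
  norm_resolvent_step_le H.toLinearMap hpsd hη hle hxhat hxt

/-- Monotonicity of regularized Newton step lengths in the step size. -/
theorem stmt_3 {d : ℕ}
    (H : EuclideanSpace ℝ (Fin d) →L[ℝ] EuclideanSpace ℝ (Fin d))
    (hsym : ∀ u v, ⟪H u, v⟫ = ⟪u, H v⟫)
    (hpsd : ∀ v, 0 ≤ ⟪H v, v⟫)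
    (g x xhat xt : EuclideanSpace ℝ (Fin d)) (η ηt : ℝ)
    (hη : 0 < η) (hle : η ≤ ηt)
    (hxhat : xhat - x + η • H (xhat - x) = -(η • g))
    (hxt : xt - x + ηt • H (xt - x) = -(ηt • g)) :
    ‖xt - x‖ ≤ (ηt/η) * ‖xhat - x‖ :=
  stmt_3_general H hpsd g x xhat xt η ηt hη hle hxhat hxt
end

section
/- Let (η_t)_{t≥0} be a sequence of positive reals, β ∈ (0, 1/2], σ₀ > 0, and let φ(t) = C√(log(d(t+1)/δ)/(t+1)) for constants C > 0, d ≥ 1, δ ∈ (0,1) with d/δ ≥ e. Suppose that for every t ≥ 0, either η_t ≥ αβ/(2M₁ + φ(t)) or η_t = σ_t, where σ₀ is given and σ_{t+1} = η_t/β. Then for all t ≥ 0, η_t ≥ min{ αβ/(2M₁ + φ(t)), σ₀/β^t }. -/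
/-!
Write `a t = αβ / (2M₁ + φ t)` for the acceptance threshold. Since the logarithm increases and
`(t+1)/(t+2) ≥ 1/4`, each step shrinks `φ` by at most the factor `1/2 ≥ β`, so
`a (t+1) ≤ a t / β`. Hence both bounds in the minimum grow by at most the factor `1/β` per step,
which is exactly the growth of a backtracking step `η (t+1) = η t / β`; induct on `t`.
-/

open Real

theorem min_le_of_backtracking {β σ₀ : ℝ} {a η σ : ℕ → ℝ} (hβ : 0 < β)
    (ha : ∀ t, a (t + 1) ≤ a t / β) (hσ0 : σ 0 = σ₀) (hσrec : ∀ t, σ (t + 1) = η t / β)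
    (halt : ∀ t, a t ≤ η t ∨ η t = σ t) :
    ∀ t, min (a t) (σ₀ / β ^ t) ≤ η t := by
  intro t
  induction t with
  | zero =>
    rcases halt 0 with h | h
    · exact (min_le_left _ _).trans h
    · simp [h, hσ0]
  | succ t ih =>
    rcases halt (t + 1) with h | h
    · exact (min_le_left _ _).trans h
    rw [h, hσrec t, pow_succ, ← div_div]
    calc min (a (t + 1)) (σ₀ / β ^ t / β)
        ≤ min (a t / β) (σ₀ / β ^ t / β) := min_le_min_right _ (ha t)
      _ = min (a t) (σ₀ / β ^ t) / β := min_div_div_right hβ.le _ _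
      _ ≤ η t / β := by gcongr

theorem sqrt_log_mul_div_le_two_mul {K s : ℝ} (hK : 1 ≤ K) (hs : 1 ≤ s) :
    √(log (K * s) / s) ≤ 2 * √(log (K * (s + 1)) / (s + 1)) := by
  have hlog_nonneg : 0 ≤ log (K * (s + 1)) := log_nonneg (by nlinarith)
  have hlog_mono : log (K * s) ≤ log (K * (s + 1)) :=
    log_le_log (by positivity) (by nlinarith)
  have hinv : 1 / s ≤ 4 / (s + 1) := by
    rw [div_le_div_iff₀ (by positivity) (by positivity)]
    linarith
  calc √(log (K * s) / s)
      ≤ √(4 * (log (K * (s + 1)) / (s + 1))) := by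
        apply sqrt_le_sqrt
        calc log (K * s) / s = log (K * s) * (1 / s) := by ring
          _ ≤ log (K * (s + 1)) * (4 / (s + 1)) := by gcongr
          _ = 4 * (log (K * (s + 1)) / (s + 1)) := by ring
    _ = 2 * √(log (K * (s + 1)) / (s + 1)) := by
        rw [sqrt_mul (by norm_num), show (4 : ℝ) = 2 ^ 2 by norm_num, sqrt_sq (by norm_num)]

theorem div_le_div_div_of_mul_le {c β D D' : ℝ} (hc : 0 ≤ c) (hβ : 0 < β) (hD : 0 < D)
    (h : β * D ≤ D') : c * β / D' ≤ c * β / D / β := by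
  calc c * β / D' ≤ c * β / (β * D) := div_le_div_of_nonneg_left (by positivity) (by positivity) h
    _ = c * β / D / β := by field_simp

theorem stmt_8_general (α β σ₀ M₁ C dd δ : ℝ) (η σ : ℕ → ℝ) (φ : ℕ → ℝ)
    (hα : α ∈ Set.Ioo (0:ℝ) 1) (hβ0 : 0 < β) (hβ : β ≤ 1/2)
    (hM : 0 < M₁) (hC : 0 < C)
    (hde : Real.exp 1 ≤ dd/δ)
    (hφ : ∀ t : ℕ, φ t = C * Real.sqrt (Real.log (dd*(t+1)/δ) / (t+1)))
    (hσ0 : σ 0 = σ₀) (hσrec : ∀ t, σ (t+1) = η t / β)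
    (halt : ∀ t, α*β/(2*M₁ + φ t) ≤ η t ∨ η t = σ t) :
    ∀ t, min (α*β/(2*M₁ + φ t)) (σ₀/β^t) ≤ η t := by
  have hK : 1 ≤ dd / δ := le_trans (by simp) hde
  have hφ' : ∀ t : ℕ, φ t = C * √(log (dd / δ * (t + 1)) / (t + 1)) := fun t => by
    rw [hφ, mul_div_right_comm]
  have hφ_nonneg : ∀ t, 0 ≤ φ t := fun t => by rw [hφ t]; positivity
  have hφ_succ : ∀ t : ℕ, β * φ t ≤ φ (t + 1) := fun t => by
    have hsqrt := sqrt_log_mul_div_le_two_mul hK (s := t + 1) (by simp)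
    rw [hφ' t, hφ' (t + 1)]
    push_cast
    have hCx : 0 ≤ C * √(log (dd / δ * (t + 1)) / (t + 1)) := by positivity
    linarith [mul_le_mul_of_nonneg_right hβ hCx, mul_le_mul_of_nonneg_left hsqrt hC.le]
  refine min_le_of_backtracking hβ0 (fun t => ?_) hσ0 hσrec halt
  refine div_le_div_div_of_mul_le hα.1.le hβ0 (by linarith [hφ_nonneg t]) ?_
  nlinarith [hφ_succ t]

/-- Inductive step-size lower bound for the uniform-averaging SNPE line search. -/
theorem stmt_8 (α β σ₀ M₁ C dd δ : ℝ) (η σ : ℕ → ℝ) (φ : ℕ → ℝ)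
    (hα : α ∈ Set.Ioo (0:ℝ) 1) (hβ0 : 0 < β) (hβ : β ≤ 1/2)
    (hσ₀ : 0 < σ₀) (hM : 0 < M₁) (hC : 0 < C)
    (hd : 1 ≤ dd) (hδ : δ ∈ Set.Ioo (0:ℝ) 1) (hde : Real.exp 1 ≤ dd/δ)
    (hφ : ∀ t : ℕ, φ t = C * Real.sqrt (Real.log (dd*(t+1)/δ) / (t+1)))
    (hηpos : ∀ t, 0 < η t)
    (hσ0 : σ 0 = σ₀) (hσrec : ∀ t, σ (t+1) = η t / β)
    (halt : ∀ t, α*β/(2*M₁ + φ t) ≤ η t ∨ η t = σ t) :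
    ∀ t, min (α*β/(2*M₁ + φ t)) (σ₀/β^t) ≤ η t :=
  stmt_8_general α β σ₀ M₁ C dd δ η σ φ hα hβ0 hβ hM hC hde hφ hσ0 hσrec halt
end

section
/- For the Lambert W function (principal branch), e^{W(x)} ≤ (2x+1)/(1+log(x+1)) holds for all x ≥ 0. -/
open Real

/- Factor `w e^w + 1 = e^w (w + e^{-w})` and apply `log y ≤ y - 1` to the second factor. -/
theorem Real.log_mul_exp_add_one_le (w : ℝ) :
    log (w * exp w + 1) ≤ 2 * w + exp (-w) - 1 := by
  have hpos : 0 < w + exp (-w) := by linarith [add_one_le_exp (-w)]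
  have hfactor : w * exp w + 1 = exp w * (w + exp (-w)) := by
    rw [mul_add, exp_neg, mul_inv_cancel₀ (exp_pos w).ne']
    ring
  rw [hfactor, log_mul (exp_pos w).ne' hpos.ne', log_exp]
  linarith [log_le_sub_one_of_pos hpos]

theorem stmt_18_general (x wx : ℝ) (hx : 0 ≤ x)
    (hw : wx * Real.exp wx = x) :
    Real.exp wx ≤ (2*x+1)/(1+Real.log (x+1)) := by
  have hden : 0 < 1 + log (x + 1) := by linarith [log_nonneg (by linarith : (1 : ℝ) ≤ x + 1)]
  have hlog := log_mul_exp_add_one_le wx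
  rw [hw] at hlog
  rw [le_div_iff₀ hden]
  calc exp wx * (1 + log (x + 1)) ≤ exp wx * (2 * wx + exp (-wx)) :=
      mul_le_mul_of_nonneg_left (by linarith) (exp_pos wx).le
    _ = 2 * x + 1 := by rw [mul_add, exp_neg, mul_inv_cancel₀ (exp_pos wx).ne', ← hw]; ring

/-- Elementary bound on the Lambert W function: `e^{W(x)} ≤ (2x+1)/(1+log(x+1))`
for `x ≥ 0`, where `wx = W(x)` is characterized by `wx ≥ 0` and `wx·e^{wx} = x`. -/
theorem stmt_18 (x wx : ℝ) (hx : 0 ≤ x) (hw0 : 0 ≤ wx)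
    (hw : wx * Real.exp wx = x) :
    Real.exp wx ≤ (2*x+1)/(1+Real.log (x+1)) :=
  stmt_18_general x wx hx hw
end
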